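/- In F̂_q[SL_n] with coproduct Δ(ρ_ij) = Σ_k ρ_ik ⊗ ρ_kj, for the rescaled generators r_ij := (ρ_ij - δ_ij)/(q-1) one has, for all N ≥ 1, δ_N(r_ij) = (q-1)^{N-1} · Σ_{k_1,…,k_{N-1}} r_{i,k_1} ⊗ r_{k_1,k_2} ⊗ ⋯ ⊗ r_{k_{N-1},j}; consequently (q-1)r_ij = ρ_ij - δ_ij lies in the double-Drinfeld subalgebra, i.e. δ_N((q-1)r_ij) ∈ (q-1)^N F̃_q[SL_n]^{⊗N} for all N. -/

import Mathlib

open TensorProduct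

noncomputable section

universe u
variable (R : Type u) [CommRing R] (H : Type u) [Ring H] [HopfAlgebra R H]

/-- Right-nested tensor power `H ⊗ ⋯ ⊗ H ⊗ R`, bundled to get instances. -/
def TPowM : ℕ → ModuleCat.{u} R
  | 0 => ModuleCat.of R R
  | n+1 => ModuleCat.of R (H ⊗[R] (TPowM n))

abbrev TPow (n : ℕ) : Type u := (TPowM R H n)

/-- Iterated coproduct `Δ^n : H → H^{⊗ n}`. -/
def Delta : ∀ n : ℕ, H →ₗ[R] TPow R H n
  | 0 => Coalgebra.counit
  | n+1 => (TensorProduct.map LinearMap.id (Delta n)) ∘ₗ Coalgebra.comul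

/-- The projection `id - η ∘ ε`. -/
def projKer : H →ₗ[R] H :=
  LinearMap.id - (Algebra.linearMap R H) ∘ₗ Coalgebra.counit

/-- `(id - η∘ε)^{⊗ n}`. -/
def PMap : ∀ n : ℕ, TPow R H n →ₗ[R] TPow R H n
  | 0 => LinearMap.id
  | n+1 => TensorProduct.map (projKer R H) (PMap n)

/-- Drinfeld's map `δ_n := (id - η∘ε)^{⊗ n} ∘ Δ^n`. -/
def ddelta (n : ℕ) : H →ₗ[R] TPow R H n := (PMap R H n) ∘ₗ (Delta R H n)

/-- The embedding `k[q,q⁻¹] → k(q)` sending `q` to `X`. -/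
def iR (k : Type) [Field k] : LaurentPolynomial k →ₐ[k] RatFunc k :=
  (AddMonoidAlgebra.lift k (RatFunc k) ℤ)
    ((Units.coeHom (RatFunc k)).comp
      (zpowersHom (RatFunc k)ˣ (Units.mk0 RatFunc.X RatFunc.X_ne_zero)))

instance (k : Type) [Field k] : Algebra (LaurentPolynomial k) (RatFunc k) :=
  (iR k).toAlgebra

instance (k : Type) [Field k] (F : Type) [Semiring F] [Algebra (RatFunc k) F] :
    Algebra (LaurentPolynomial k) F :=
  RingHom.toAlgebra'
    ((algebraMap (RatFunc k) F).comp (algebraMap (LaurentPolynomial k) (RatFunc k)))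
    (fun c x => Algebra.commutes ((algebraMap (LaurentPolynomial k) (RatFunc k)) c) x)

instance modR (k : Type) [Field k] (M : Type) [AddCommMonoid M]
    [Module (RatFunc k) M] : Module (LaurentPolynomial k) M :=
  Module.compHom M ((iR k) : LaurentPolynomial k →+* RatFunc k)

section SLn

variable (k : Type) [Field k] [CharZero k]
variable (F : Type) [Ring F] [HopfAlgebra (RatFunc k) F]

/-- `Σ_{k_1,…,k_{N-1}} r_{i,k_1} ⊗ r_{k_1,k_2} ⊗ ⋯ ⊗ r_{k_{N-1},j}`. -/
def bigSum {m : ℕ} (rr : Fin m → Fin m → F) :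
    ∀ N : ℕ, Fin m → Fin m → TPow (RatFunc k) F N
  | 0, _, _ => 0
  | 1, i, j => rr i j ⊗ₜ (1 : RatFunc k)
  | N+2, i, j => ∑ l : Fin m, rr i l ⊗ₜ bigSum rr (N+1) l j

/-- The `k[q,q⁻¹]`-submodule `F̃^{⊗N}` of `F_q^{⊗N}` built from a
`k[q,q⁻¹]`-subalgebra `F̃` of `F_q`. -/
def FtPow (S : Subalgebra (LaurentPolynomial k) F) :
    ∀ N : ℕ, Submodule (LaurentPolynomial k) (TPow (RatFunc k) F N)
  | 0 => Submodule.span (LaurentPolynomial k) {(1 : RatFunc k)}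
  | N+1 => Submodule.span (LaurentPolynomial k)
      {t : F ⊗[RatFunc k] TPow (RatFunc k) F N |
        ∃ u ∈ S, ∃ v ∈ FtPow S N, t = u ⊗ₜ v}

end SLn

/-! Since `Δ(ρ_ij) = Σ_l ρ_il ⊗ ρ_lj`, the iterated coproduct of `ρ_ij` is the path sum
`Σ ρ_{i,k₁} ⊗ ⋯ ⊗ ρ_{k_{N-1},j}`, and applying `(id - η∘ε)^{⊗N}` turns every factor into
`ρ - δ = (q-1) r`. As `δ_N` kills scalars for `N ≥ 1`, `δ_N(ρ_ij - δ_ij) = δ_N(ρ_ij)`, which gives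
`δ_N((q-1) r_ij) = (q-1)^N Σ r_{i,k₁} ⊗ ⋯ ⊗ r_{k_{N-1},j}`; dividing by `q - 1 ≠ 0` yields the
formula, and the path sum of the `r`'s visibly lies in `F̃^{⊗N}`. -/

theorem RatFunc.X_sub_one_ne_zero (k : Type) [Field k] : (RatFunc.X : RatFunc k) - 1 ≠ 0 := by
  simpa using RatFunc.algebraMap_ne_zero (K := k) (Polynomial.X_sub_C_ne_zero (1 : k))

section Drinfeld

variable {R H}

theorem projKer_apply (x : H) :
    projKer R H x = x - algebraMap R H (Coalgebra.counit (R := R) x) := rfl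

theorem counit_projKer (x : H) : Coalgebra.counit (R := R) (projKer R H x) = 0 := by
  rw [projKer_apply, map_sub, Bialgebra.counit_algebraMap, sub_self]

theorem ddelta_succ_apply (n : ℕ) (x : H) :
    (ddelta R H (n + 1) x : H ⊗[R] TPow R H n) =
      TensorProduct.map (projKer R H) (ddelta R H n) (Coalgebra.comul (R := R) x) := by
  change TensorProduct.map (projKer R H) (PMap R H n)
    (TensorProduct.map LinearMap.id (Delta R H n) (Coalgebra.comul (R := R) x)) = _
  rw [← LinearMap.comp_apply, ← TensorProduct.map_comp, LinearMap.comp_id]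
  rfl

theorem ddelta_succ_algebraMap (n : ℕ) (a : R) : ddelta R H (n + 1) (algebraMap R H a) = 0 := by
  rw [ddelta_succ_apply, Bialgebra.comul_algebraMap, Algebra.TensorProduct.algebraMap_apply,
    TensorProduct.map_tmul, projKer_apply, Bialgebra.counit_algebraMap, sub_self,
    TensorProduct.zero_tmul]
  rfl

theorem ddelta_succ_projKer (n : ℕ) (x : H) :
    ddelta R H (n + 1) (projKer R H x) = ddelta R H (n + 1) x := by
  rw [projKer_apply, map_sub, ddelta_succ_algebraMap, sub_zero]

end Drinfeld

section MatrixCoefficients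

variable {k : Type} [Field k] {F : Type} [Ring F] [HopfAlgebra (RatFunc k) F] {m : ℕ}

theorem bigSum_smul (c : RatFunc k) (r : Fin m → Fin m → F) (N : ℕ) (i j : Fin m) :
    bigSum k F (fun i j => c • r i j) N i j = c ^ N • bigSum k F r N i j := by
  induction N, i, j using bigSum.induct with
  | case1 => simp only [bigSum, smul_zero]
  | case2 i j => exact (pow_one c).symm ▸ (TensorProduct.smul_tmul' _ _ _).symm
  | case3 N i j ih =>
    simp only [bigSum, ih, TensorProduct.tmul_smul, ← TensorProduct.smul_tmul', smul_smul,
      ← pow_succ]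
    exact (Finset.smul_sum ..).symm

theorem bigSum_mem_FtPow (S : Subalgebra (LaurentPolynomial k) F) {r : Fin m → Fin m → F}
    (hr : ∀ i j, r i j ∈ S) (N : ℕ) (i j : Fin m) : bigSum k F r N i j ∈ FtPow k F S N := by
  induction N, i, j using bigSum.induct with
  | case1 => exact zero_mem _
  | case2 i j =>
    exact Submodule.subset_span ⟨r i j, hr i j, (1 : RatFunc k), Submodule.subset_span rfl, rfl⟩
  | case3 N i j ih =>
    exact Submodule.sum_mem _ fun l _ =>
      Submodule.subset_span ⟨r i l, hr i l, bigSum k F r (N + 1) l j, ih l, rfl⟩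

theorem ddelta_projKer_eq_bigSum (ρ : Fin m → Fin m → F)
    (hcomul : ∀ i j, Coalgebra.comul (R := RatFunc k) (ρ i j) = ∑ l, ρ i l ⊗ₜ ρ l j)
    (hcounit : ∀ i j, Coalgebra.counit (R := RatFunc k) (ρ i j) = if i = j then 1 else 0)
    (N : ℕ) (i j : Fin m) :
    ddelta (RatFunc k) F N (projKer (RatFunc k) F (ρ i j)) =
      bigSum k F (fun i j => projKer (RatFunc k) F (ρ i j)) N i j := by
  induction N, i, j using bigSum.induct with
  | case1 i j => exact counit_projKer (R := RatFunc k) _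
  | case2 i j =>
    rw [ddelta_succ_projKer, ddelta_succ_apply, hcomul, map_sum]
    change ∑ l, projKer (RatFunc k) F (ρ i l) ⊗ₜ[RatFunc k]
      (Coalgebra.counit (R := RatFunc k) (ρ l j) : RatFunc k) = (_ : F ⊗[RatFunc k] RatFunc k)
    simp only [hcounit, TensorProduct.tmul_ite, Finset.sum_ite_eq', Finset.mem_univ, if_true]
    rfl
  | case3 N i j ih =>
    rw [ddelta_succ_projKer, ddelta_succ_apply, hcomul, map_sum]
    simp only [TensorProduct.map_tmul]
    refine Finset.sum_congr rfl fun l _ => ?_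
    rw [← ih l, ddelta_succ_projKer]

end MatrixCoefficients

theorem stmt11_general (k : Type) [Field k] (m : ℕ)
    (F : Type) [Ring F] [HopfAlgebra (RatFunc k) F]
    (ρ : Fin m → Fin m → F)
    (q : RatFunc k) (hq : q = RatFunc.X)
    -- Hopf structure
    (hcρ : ∀ i j : Fin m, Coalgebra.comul (R := RatFunc k) (ρ i j) =
      ∑ l : Fin m, ρ i l ⊗ₜ ρ l j)
    (heρ : ∀ i j : Fin m, Coalgebra.counit (R := RatFunc k) (ρ i j) =
      if i = j then 1 else 0) :
    -- rescaled generators and the subalgebra they generate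
    let r : Fin m → Fin m → F := fun i j =>
      (q - 1)⁻¹ • (ρ i j - if i = j then 1 else 0)
    let Ft : Subalgebra (LaurentPolynomial k) F :=
      Algebra.adjoin (LaurentPolynomial k) {x : F | ∃ i j : Fin m, x = r i j}
    (∀ (N : ℕ) (i j : Fin m),
        ddelta (RatFunc k) F (N+1) (r i j) =
          ((q - 1) ^ N) • bigSum k F r (N+1) i j) ∧
    (∀ (N : ℕ) (i j : Fin m),
        ∃ y ∈ FtPow k F Ft N,
          ddelta (RatFunc k) F N ((q - 1) • r i j) = ((q - 1) ^ N) • y) := by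
  intro r Ft
  have hq₁ : q - 1 ≠ 0 := hq ▸ RatFunc.X_sub_one_ne_zero k
  have hprojKer : ∀ i j, projKer (RatFunc k) F (ρ i j) = (q - 1) • r i j := fun i j => by
    rw [smul_inv_smul₀ hq₁, projKer_apply, heρ, apply_ite (algebraMap _ F), map_one, map_zero]
  have hscaled : ∀ N i j,
      ddelta (RatFunc k) F N ((q - 1) • r i j) = (q - 1) ^ N • bigSum k F r N i j := by
    intro N i j
    rw [← hprojKer, ddelta_projKer_eq_bigSum ρ hcρ heρ, ← bigSum_smul]
    simp only [hprojKer]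
  refine ⟨fun N i j => smul_right_injective _ hq₁ ?_, fun N i j => ⟨bigSum k F r N i j,
    bigSum_mem_FtPow Ft (fun i j => Algebra.subset_adjoin ⟨i, j, rfl⟩) N i j, hscaled N i j⟩⟩
  beta_reduce
  rw [← map_smul, hscaled, smul_smul, ← pow_succ']

set_option synthInstance.maxHeartbeats 1000000 in
set_option maxHeartbeats 1000000 in
/-- In `F̂_q[SL_n]`, for the rescaled generators `r_ij := (ρ_ij - δ_ij)/(q-1)` one has
`δ_N(r_ij) = (q-1)^{N-1} Σ r_{i,k₁} ⊗ ⋯ ⊗ r_{k_{N-1},j}` for all `N ≥ 1`; consequently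
`(q-1)r_ij = ρ_ij - δ_ij` satisfies `δ_N((q-1)r_ij) ∈ (q-1)^N F̃_q[SL_n]^{⊗N}` for
all `N`, where `F̃_q[SL_n]` is generated by all the `r_ij`. -/
theorem stmt11 (k : Type) [Field k] [CharZero k] (m : ℕ)
    (F : Type) [Ring F] [HopfAlgebra (RatFunc k) F]
    (ρ : Fin m → Fin m → F)
    (q : RatFunc k) (hq : q = RatFunc.X)
    -- relations of `F̂_q[SL_n]`
    (rel1 : ∀ i j l : Fin m, j < l → ρ i j * ρ i l = q • (ρ i l * ρ i j))
    (rel2 : ∀ i h l : Fin m, i < h → ρ i l * ρ h l = q • (ρ h l * ρ i l))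
    (rel3 : ∀ i j l t : Fin m, i < j → t < l → ρ i l * ρ j t = ρ j t * ρ i l)
    (rel4 : ∀ i j l t : Fin m, i < j → l < t →
      ρ i l * ρ j t - ρ j t * ρ i l = (q - q⁻¹) • (ρ i t * ρ j l))
    (hdet : ∑ σ : Equiv.Perm (Fin m),
      ((-q) ^ ((Finset.univ.filter
          (fun p : Fin m × Fin m => p.1 < p.2 ∧ σ p.2 < σ p.1)).card)) •
        (List.ofFn (fun i : Fin m => ρ i (σ i))).prod = 1)
    -- Hopf structure
    (hcρ : ∀ i j : Fin m, Coalgebra.comul (R := RatFunc k) (ρ i j) =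
      ∑ l : Fin m, ρ i l ⊗ₜ ρ l j)
    (heρ : ∀ i j : Fin m, Coalgebra.counit (R := RatFunc k) (ρ i j) =
      if i = j then 1 else 0) :
    -- rescaled generators and the subalgebra they generate
    let r : Fin m → Fin m → F := fun i j =>
      (q - 1)⁻¹ • (ρ i j - if i = j then 1 else 0)
    let Ft : Subalgebra (LaurentPolynomial k) F :=
      Algebra.adjoin (LaurentPolynomial k) {x : F | ∃ i j : Fin m, x = r i j}
    (∀ (N : ℕ) (i j : Fin m),
        ddelta (RatFunc k) F (N+1) (r i j) =
          ((q - 1) ^ N) • bigSum k F r (N+1) i j) ∧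
    (∀ (N : ℕ) (i j : Fin m),
        ∃ y ∈ FtPow k F Ft N,
          ddelta (RatFunc k) F N ((q - 1) • r i j) = ((q - 1) ^ N) • y) :=
  stmt11_general k m F ρ q hq hcρ heρ
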